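/- arXiv:1405.7064 — 4 statements merged into one kernel-verified Lean document; each statement's English description precedes it below -/
import Mathlib

section
/- Let p be a rational prime, let f be a polynomial with coefficients in the p-adic integers ℤ_p, and let x ∈ ℤ_p with f'(x) ≠ 0. Suppose that either ν(f(x)) > 2ν(f'(x)) (where ν denotes the p-adic valuation and this inequality is understood to hold in particular when f(x) = 0), or ν(f(x)) = 2ν(f'(x)) with ν(f'(x)) ≥ 1 and ν(f''(x)/2) ≥ 1. Then there exists y ∈ ℤ_p such that f(y) = 0 and y ≡ x (mod p). -/
/-!
When `ν(f(x)) = 2ν(f'(x))`, Hensel's condition `‖f(x)‖ < ‖f'(x)‖²` just fails, so first take one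
Newton step `x + t` with `f(x) + f'(x) t = 0`, hence `ν(t) = ν(f'(x)) ≥ 1`. Taylor expansion gives
`f(x + t) = t² (f''(x)/2 + O(t))`, and `p ∣ f''(x)/2` supplies the missing factor of `p`, while
`f'(x + t) = f'(x) + t (f''(x) + O(t))` has the same valuation as `f'(x)`. Hensel's lemma then applies
at `x + t ≡ x (mod p)`.
-/

open Polynomial

namespace Polynomial

variable {R : Type*}

theorem eval_eq_coeff_zero_add_mul_eval_divX [CommSemiring R] (g : R[X]) (t : R) :
    g.eval t = g.coeff 0 + t * g.divX.eval t := by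
  conv_lhs => rw [← X_mul_divX_add g]
  simp only [eval_add, eval_mul, eval_X, eval_C, add_comm]

theorem exists_eval_add_eq_hasseDeriv_two [CommRing R] (f : R[X]) (x t : R) :
    ∃ c, f.eval (x + t) =
      f.eval x + f.derivative.eval x * t + t ^ 2 * ((hasseDeriv 2 f).eval x + c * t) := by
  refine ⟨(taylor x f).divX.divX.divX.eval t, ?_⟩
  rw [add_comm x t, ← taylor_eval, eval_eq_coeff_zero_add_mul_eval_divX,
    eval_eq_coeff_zero_add_mul_eval_divX (taylor x f).divX,
    eval_eq_coeff_zero_add_mul_eval_divX (taylor x f).divX.divX]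
  simp only [coeff_divX, zero_add, Nat.reduceAdd, taylor_coeff, hasseDeriv_zero', hasseDeriv_one']
  ring

theorem derivative_derivative_eq_two_mul_hasseDeriv_two [CommSemiring R] (f : R[X]) :
    derivative (derivative f) = 2 * hasseDeriv 2 f := by
  have := congrFun (factorial_smul_hasseDeriv (R := R) 2) f
  simp only [Nat.factorial_two, LinearMap.smul_apply, Function.iterate_succ,
    Function.iterate_zero, Function.comp_apply, id_eq] at this
  rw [← this, nsmul_eq_mul, Nat.cast_ofNat]

end Polynomial

namespace PadicInt

variable {p : ℕ} [Fact p.Prime]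

theorem dvd_of_norm_le {a b : ℤ_[p]} (hb : b ≠ 0) (h : ‖a‖ ≤ ‖b‖) : b ∣ a := by
  have hb' : (b : ℚ_[p]) ≠ 0 := fun h => hb (Subtype.ext h)
  refine ⟨⟨a / b, ?_⟩, Subtype.ext ?_⟩
  · rw [norm_div, div_le_one (norm_pos_iff.2 hb')]
    exact h
  · exact (mul_div_cancel₀ _ hb').symm

theorem norm_lt_norm_of_valuation_lt {a b : ℤ_[p]} (hb : b ≠ 0)
    (h : b.valuation < a.valuation) : ‖a‖ < ‖b‖ := by
  rcases eq_or_ne a 0 with rfl | ha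
  · simpa using hb
  rw [norm_eq_zpow_neg_valuation ha, norm_eq_zpow_neg_valuation hb]
  exact zpow_lt_zpow_right₀ (by exact_mod_cast (Fact.out : p.Prime).one_lt) (by omega)

theorem norm_eq_norm_of_valuation_eq {a b : ℤ_[p]} (ha : a ≠ 0) (hb : b ≠ 0)
    (h : a.valuation = b.valuation) : ‖a‖ = ‖b‖ := by
  rw [norm_eq_zpow_neg_valuation ha, norm_eq_zpow_neg_valuation hb, h]

end PadicInt

namespace Polynomial

variable {p : ℕ} [Fact p.Prime]

theorem exists_root_norm_sub_lt_one_of_norm_lt_sq {f : ℤ_[p][X]} {a : ℤ_[p]}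
    (h : ‖f.eval a‖ < ‖f.derivative.eval a‖ ^ 2) :
    ∃ y, f.eval y = 0 ∧ ‖y - a‖ < 1 := by
  obtain ⟨y, hy, hya, -, -⟩ := hensels_lemma h
  exact ⟨y, hy, hya.trans_le (PadicInt.norm_le_one _)⟩

theorem norm_eval_add_eq_of_norm_derivative_lt_one {g : ℤ_[p][X]} {x t : ℤ_[p]}
    (hg : g.eval x ≠ 0) (hg1 : ‖g.eval x‖ < 1) (hg' : ‖g.derivative.eval x‖ < 1)
    (ht : ‖t‖ ≤ ‖g.eval x‖) : ‖g.eval (x + t)‖ = ‖g.eval x‖ := by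
  obtain ⟨k, hk⟩ := binomExpansion g x t
  have hsmall : ‖t * (g.derivative.eval x + k * t)‖ < ‖g.eval x‖ := by
    have ht1 : ‖k * t‖ < 1 := PadicInt.norm_lt_one_mul (ht.trans_lt hg1)
    rw [norm_mul]
    calc ‖t‖ * ‖g.derivative.eval x + k * t‖ ≤ ‖g.eval x‖ * ‖g.derivative.eval x + k * t‖ :=
          mul_le_mul_of_nonneg_right ht (norm_nonneg _)
      _ < ‖g.eval x‖ := mul_lt_of_lt_one_right (norm_pos_iff.2 hg)
          (PadicInt.norm_lt_one_add hg' ht1)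
  have hexp : g.eval (x + t) = g.eval x + t * (g.derivative.eval x + k * t) := by
    rw [hk]; ring
  rw [hexp, PadicInt.norm_add_eq_max_of_ne hsmall.ne', max_eq_left hsmall.le]

theorem norm_eval_add_lt_sq_of_eval_add_mul_eq_zero {f : ℤ_[p][X]} {x t : ℤ_[p]}
    (ht0 : t ≠ 0) (ht1 : ‖t‖ < 1) (hnewton : f.eval x + f.derivative.eval x * t = 0)
    (h2 : ‖(hasseDeriv 2 f).eval x‖ < 1) : ‖f.eval (x + t)‖ < ‖t‖ ^ 2 := by
  obtain ⟨c, hc⟩ := exists_eval_add_eq_hasseDeriv_two f x t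
  rw [hc, hnewton, zero_add, norm_mul, norm_pow]
  exact mul_lt_of_lt_one_right (pow_pos (norm_pos_iff.2 ht0) 2)
    (PadicInt.norm_lt_one_add h2 (PadicInt.norm_lt_one_mul ht1))

theorem exists_root_norm_sub_lt_one_of_norm_eq_sq {f : ℤ_[p][X]} {x : ℤ_[p]}
    (hd : f.derivative.eval x ≠ 0) (he : ‖f.eval x‖ = ‖f.derivative.eval x‖ ^ 2)
    (hd1 : ‖f.derivative.eval x‖ < 1) (h2 : ‖(hasseDeriv 2 f).eval x‖ < 1) :
    ∃ y, f.eval y = 0 ∧ ‖y - x‖ < 1 := by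
  have hdpos : 0 < ‖f.derivative.eval x‖ := norm_pos_iff.2 hd
  obtain ⟨t, hnewton⟩ : ∃ t, f.eval x + f.derivative.eval x * t = 0 := by
    obtain ⟨s, hs⟩ := PadicInt.dvd_of_norm_le hd <| by
      rw [he, sq]
      exact mul_le_of_le_one_left hdpos.le (PadicInt.norm_le_one _)
    exact ⟨-s, by rw [hs]; ring⟩
  have ht_norm : ‖t‖ = ‖f.derivative.eval x‖ := by
    rw [eq_neg_of_add_eq_zero_left hnewton, norm_neg, norm_mul, sq] at he
    exact mul_left_cancel₀ hdpos.ne' he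
  have ht1 : ‖t‖ < 1 := ht_norm ▸ hd1
  have hf'' : ‖(derivative (derivative f)).eval x‖ < 1 := by
    rw [derivative_derivative_eq_two_mul_hasseDeriv_two, eval_mul]
    exact PadicInt.norm_lt_one_mul h2
  have hval : ‖f.eval (x + t)‖ < ‖t‖ ^ 2 :=
    norm_eval_add_lt_sq_of_eval_add_mul_eq_zero (norm_pos_iff.1 (ht_norm ▸ hdpos)) ht1 hnewton h2
  have hderiv : ‖f.derivative.eval (x + t)‖ = ‖t‖ :=
    ht_norm ▸ norm_eval_add_eq_of_norm_derivative_lt_one hd hd1 hf'' ht_norm.le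
  obtain ⟨y, hy, hyt⟩ := exists_root_norm_sub_lt_one_of_norm_lt_sq (hderiv ▸ hval)
  refine ⟨y, hy, ?_⟩
  rw [show y - x = (y - (x + t)) + t by ring]
  exact PadicInt.norm_lt_one_add hyt ht1

end Polynomial

/-- A non-standard variant of Hensel's lemma. Note that `ν(f''(x)/2) ≥ 1` is expressed
as `2p ∣ f''(x)` in ℤ_p (the value `f''(x)` is always divisible by 2). -/
theorem hensel_variant (p : ℕ) [Fact p.Prime] (f : Polynomial ℤ_[p]) (x : ℤ_[p])
    (hf' : Polynomial.eval x (Polynomial.derivative f) ≠ 0)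
    (h : Polynomial.eval x f = 0 ∨
      2 * (Polynomial.eval x (Polynomial.derivative f)).valuation <
        (Polynomial.eval x f).valuation ∨
      ((Polynomial.eval x f).valuation =
          2 * (Polynomial.eval x (Polynomial.derivative f)).valuation ∧
        1 ≤ (Polynomial.eval x (Polynomial.derivative f)).valuation ∧
        (2 * p : ℤ_[p]) ∣ Polynomial.eval x (Polynomial.derivative (Polynomial.derivative f)))) :
    ∃ y : ℤ_[p], Polynomial.eval y f = 0 ∧ (p : ℤ_[p]) ∣ (y - x) := by
  suffices ∃ y, f.eval y = 0 ∧ ‖y - x‖ < 1 by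
    simpa only [PadicInt.norm_lt_one_iff_dvd] using this
  have hsq : ‖f.derivative.eval x‖ ^ 2 = ‖f.derivative.eval x ^ 2‖ := (norm_pow _ _).symm
  rcases h with hroot | hlt | ⟨heq, hd1, hf''⟩
  · exact ⟨x, hroot, by simp⟩
  · refine exists_root_norm_sub_lt_one_of_norm_lt_sq (hsq ▸ ?_)
    exact PadicInt.norm_lt_norm_of_valuation_lt (pow_ne_zero 2 hf')
      (by rwa [PadicInt.valuation_pow])
  · rcases eq_or_ne (f.eval x) 0 with hroot | hfx
    · exact ⟨x, hroot, by simp⟩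
    refine exists_root_norm_sub_lt_one_of_norm_eq_sq hf' (hsq ▸ ?_) ?_ ?_
    · exact PadicInt.norm_eq_norm_of_valuation_eq hfx (pow_ne_zero 2 hf')
        (by rw [heq, PadicInt.valuation_pow])
    · simpa using PadicInt.norm_lt_norm_of_valuation_lt one_ne_zero
        (by rwa [PadicInt.valuation_one])
    · rw [derivative_derivative_eq_two_mul_hasseDeriv_two, eval_mul, eval_ofNat] at hf''
      exact (PadicInt.norm_lt_one_iff_dvd _).2
        ((mul_dvd_mul_iff_left two_ne_zero).1 hf'')
end

section
/- Let r₃ ≥ 1 and r₂, r₁ ≥ 0 be integers and let N be a natural number. Suppose that for every n > N, every system consisting of r₃ − 1 cubic forms, 3r₃ + r₂ quadratic forms and 6r₃ + 3r₂ + r₁ linear forms over ℚ₃ in n variables has a common nontrivial zero. Then for every n > N, every system consisting of r₃ cubic forms, r₂ quadratic forms and r₁ linear forms over ℚ₃ in n variables has a common nontrivial zero. -/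
/-!
Single out one cubic `G`. Given points `b₀, b₁, b₂`, apply the hypothesis to the other `r₃ - 1`
cubics, to the quadratic parts of `C j (b_s + y)` and the `Q i`, and to the linear parts of
`C j (b + y)` (`b = b_s` or `b_s + b_t`), of `Q i (b_s + y)` and the `L i`. This gives a nonzero
`r` at which every form but `G` vanishes and which is orthogonal to `b₀, b₁, b₂` for the polar
forms of all cubic and quadratic forms. On the span of mutually orthogonal points every form is
diagonal, so it is enough to find a nontrivial zero of a diagonal cubic `∑ G(pᵢ) xᵢ³` over
mutually orthogonal points `pᵢ`.

Over `ℚ₃` only the valuations of the coefficients modulo `3` and their unit parts modulo `9`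
matter, since the unit cubes are the units `≡ ±1 mod 9`. A ternary diagonal cubic with valuation
pattern `(ℓ, ℓ, ℓ + 1)` always has a nontrivial zero, and two coefficients of equal valuation class
either give a binary zero or combine to a coefficient of valuation one higher. Starting from two
orthogonal points, at most four more applications of the hypothesis reach one of these cases.
-/

open MvPolynomial

namespace MvPolynomial

variable {σ K : Type*} [Field K]

theorem aeval_monomial_eq_mul_prod_toMultiset {A : Type*} [CommRing A] [Algebra K A]
    (g : σ → A) (d : σ →₀ ℕ) (r : K) :
    aeval g (monomial d r) = algebraMap K A r * (d.toMultiset.map g).prod := by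
  classical
  rw [aeval_monomial, Finsupp.toMultiset_map, Finsupp.prod_toMultiset,
    Finsupp.prod_mapDomain_index (fun _ => pow_zero _) (fun _ _ _ => pow_add _ _ _)]

theorem eval_monomial_eq_mul_prod_toMultiset (d : σ →₀ ℕ) (r : K) (v : σ → K) :
    eval v (monomial d r) = r * (d.toMultiset.map v).prod := by
  simpa using aeval_monomial_eq_mul_prod_toMultiset v d r

theorem IsHomogeneous.induction_on_toMultiset {d : ℕ}
    {motive : (P : MvPolynomial σ K) → P.IsHomogeneous d → Prop}
    (zero : motive 0 (isHomogeneous_zero _ _ _))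
    (add : ∀ p q hp hq, motive p hp → motive q hq → motive (p + q) (hp.add hq))
    (monomial : ∀ (m : σ →₀ ℕ) (r : K) (hm : Multiset.card m.toMultiset = d),
      motive (monomial m r) (isHomogeneous_monomial _ (by
        rw [← hm, Finsupp.card_toMultiset]; rfl)))
    {P : MvPolynomial σ K} (hP : P.IsHomogeneous d) : motive P hP := by
  refine IsWeightedHomogeneous.induction_on zero add (fun m r hm => monomial m r ?_) hP
  rw [Finsupp.card_toMultiset, ← hm]
  simp [Finsupp.weight_apply, Finsupp.sum]

theorem IsHomogeneous.eval_smul {P : MvPolynomial σ K} {d : ℕ} (hP : P.IsHomogeneous d)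
    (t : K) (x : σ → K) : eval (t • x) P = t ^ d * eval x P := by
  induction hP using IsHomogeneous.induction_on_toMultiset with
  | zero => simp
  | add p q _ _ hp hq => rw [map_add, map_add, hp, hq, mul_add]
  | monomial m r hm =>
    simp only [eval_monomial_eq_mul_prod_toMultiset, Pi.smul_apply, smul_eq_mul,
      Multiset.prod_map_mul, Multiset.map_const', Multiset.prod_replicate, hm]
    ring

theorem IsHomogeneous.totalDegree_aeval_le {τ : Type*} {P : MvPolynomial σ K} {d e : ℕ}
    (hP : P.IsHomogeneous d) {g : σ → MvPolynomial τ K} (hg : ∀ i, (g i).totalDegree ≤ e) :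
    (MvPolynomial.aeval g P).totalDegree ≤ d * e := by
  induction hP using IsHomogeneous.induction_on_toMultiset with
  | zero => simp
  | add p q _ _ hp hq => rw [map_add]; exact (totalDegree_add _ _).trans (max_le hp hq)
  | monomial m r hm =>
    rw [aeval_monomial_eq_mul_prod_toMultiset, algebraMap_eq]
    refine (totalDegree_mul _ _).trans ?_
    rw [totalDegree_C, zero_add]
    refine (totalDegree_multiset_prod _).trans ?_
    rw [Multiset.map_map, ← hm, ← Multiset.card_map (MvPolynomial.totalDegree ∘ g), ← smul_eq_mul]
    refine Multiset.sum_le_card_nsmul _ e fun n hn => ?_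
    obtain ⟨i, -, rfl⟩ := Multiset.mem_map.mp hn
    exact hg i

noncomputable def shiftComponent (k : ℕ) (a : σ → K) (P : MvPolynomial σ K) :
    MvPolynomial σ K :=
  homogeneousComponent k (bind₁ (fun i => X i + C (a i)) P)

theorem shiftComponent_isHomogeneous (k : ℕ) (a : σ → K) (P : MvPolynomial σ K) :
    (shiftComponent k a P).IsHomogeneous k :=
  homogeneousComponent_isHomogeneous _ _

theorem eval_bind₁_X_add_C (P : MvPolynomial σ K) (a y : σ → K) :
    eval y (bind₁ (fun i => X i + C (a i)) P) = eval (a + y) P := by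
  induction P using MvPolynomial.induction_on with
  | C r => simp
  | add p q hp hq => simp [hp, hq]
  | mul_X p i hp => simp [hp, add_comm]

theorem IsHomogeneous.eval_add_smul_eq_sum {P : MvPolynomial σ K} {d : ℕ}
    (hP : P.IsHomogeneous d) (a y : σ → K) (t : K) :
    eval (a + t • y) P = ∑ k ∈ Finset.range (d + 1), t ^ k * eval y (shiftComponent k a P) := by
  let F := bind₁ (fun i => X i + C (a i)) P
  have hdeg : F.totalDegree ≤ d := by
    simpa [aeval_eq_bind₁] using hP.totalDegree_aeval_le (e := 1) fun i =>
      (totalDegree_add _ _).trans (by simp)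
  have hsum : ∑ k ∈ Finset.range (d + 1), homogeneousComponent k F = F := by
    rw [← Finset.sum_subset (Finset.range_subset_range.mpr (Nat.succ_le_succ hdeg)),
      sum_homogeneousComponent]
    intro k _ hk
    exact homogeneousComponent_eq_zero _ _ (by simpa using hk)
  rw [← eval_bind₁_X_add_C, show bind₁ _ P = F from rfl, ← hsum, map_sum]
  exact Finset.sum_congr rfl fun k _ => (homogeneousComponent_isHomogeneous k F).eval_smul t y

theorem IsHomogeneous.eval_add_smul_of_degree_one {L : MvPolynomial σ K} (hL : L.IsHomogeneous 1)
    (a b : σ → K) (t : K) : eval (a + t • b) L = eval a L + t * eval b L := by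
  induction hL using IsHomogeneous.induction_on_toMultiset with
  | zero => simp
  | add p q _ _ hp hq => simp only [map_add, hp, hq]; ring
  | monomial m r hm =>
    obtain ⟨i, hi⟩ := Multiset.card_eq_one.mp hm
    simp only [eval_monomial_eq_mul_prod_toMultiset, hi, Multiset.map_singleton,
      Multiset.prod_singleton, Pi.add_apply, Pi.smul_apply, smul_eq_mul]
    ring

section Polar

variable {P Q : MvPolynomial σ K}

noncomputable def polar3 (P : MvPolynomial σ K) (x y z : σ → K) : K :=
  (6 : K)⁻¹ * (eval (x + y + z) P - eval (x + y) P - eval (x + z) P - eval (y + z) P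
    + eval x P + eval y P + eval z P)

theorem polar3_comm_left (P : MvPolynomial σ K) (x y z : σ → K) :
    polar3 P x y z = polar3 P y x z := by
  unfold polar3; rw [add_comm x y]; ring

theorem polar3_comm_right (P : MvPolynomial σ K) (x y z : σ → K) :
    polar3 P x y z = polar3 P x z y := by
  unfold polar3; rw [add_right_comm x y z, add_comm z y]; ring

theorem polar3_add (P P' : MvPolynomial σ K) (x y z : σ → K) :
    polar3 (P + P') x y z = polar3 P x y z + polar3 P' x y z := by
  simp only [polar3, map_add]; ring

theorem IsHomogeneous.polar3_add_smul_left (hP : P.IsHomogeneous 3) (x x' y z : σ → K) (t : K) :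
    polar3 P (x + t • x') y z = polar3 P x y z + t * polar3 P x' y z := by
  induction hP using IsHomogeneous.induction_on_toMultiset with
  | zero => simp [polar3]
  | add p q _ _ hp hq => rw [polar3_add, polar3_add, polar3_add, hp, hq]; ring
  | monomial m r hm =>
    obtain ⟨i, j, k, hijk⟩ := Multiset.card_eq_three.mp hm
    simp only [polar3, eval_monomial_eq_mul_prod_toMultiset, hijk, Multiset.insert_eq_cons,
      Multiset.map_cons, Multiset.map_singleton, Multiset.prod_cons, Multiset.prod_singleton,
      Pi.add_apply, Pi.smul_apply, smul_eq_mul]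
    ring

noncomputable def polar2 (Q : MvPolynomial σ K) (x y : σ → K) : K :=
  (2 : K)⁻¹ * (eval (x + y) Q - eval x Q - eval y Q)

theorem polar2_comm (Q : MvPolynomial σ K) (x y : σ → K) : polar2 Q x y = polar2 Q y x := by
  unfold polar2; rw [add_comm x y]; ring

theorem polar2_add (Q Q' : MvPolynomial σ K) (x y : σ → K) :
    polar2 (Q + Q') x y = polar2 Q x y + polar2 Q' x y := by
  simp only [polar2, map_add]; ring

theorem IsHomogeneous.polar2_add_smul_left (hQ : Q.IsHomogeneous 2)
    (x x' y : σ → K) (t : K) : polar2 Q (x + t • x') y = polar2 Q x y + t * polar2 Q x' y := by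
  induction hQ using IsHomogeneous.induction_on_toMultiset with
  | zero => simp [polar2]
  | add p q _ _ hp hq => rw [polar2_add, polar2_add, polar2_add, hp, hq]; ring
  | monomial m r hm =>
    obtain ⟨i, j, hij⟩ := Multiset.card_eq_two.mp hm
    simp only [polar2, eval_monomial_eq_mul_prod_toMultiset, hij, Multiset.insert_eq_cons,
      Multiset.map_cons, Multiset.map_singleton, Multiset.prod_cons, Multiset.prod_singleton,
      Pi.add_apply, Pi.smul_apply, smul_eq_mul]
    ring

theorem IsHomogeneous.polar3_add_left (hP : P.IsHomogeneous 3) (x x' y z : σ → K) :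
    polar3 P (x + x') y z = polar3 P x y z + polar3 P x' y z := by
  simpa using hP.polar3_add_smul_left x x' y z 1

theorem IsHomogeneous.polar3_zero_left (hP : P.IsHomogeneous 3) (y z : σ → K) :
    polar3 P 0 y z = 0 := by
  simpa using hP.polar3_add_left 0 0 y z

theorem IsHomogeneous.polar3_smul_left (hP : P.IsHomogeneous 3) (t : K) (x y z : σ → K) :
    polar3 P (t • x) y z = t * polar3 P x y z := by
  simpa [hP.polar3_zero_left] using hP.polar3_add_smul_left 0 x y z t

theorem IsHomogeneous.polar3_add_mid (hP : P.IsHomogeneous 3) (x y y' z : σ → K) :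
    polar3 P x (y + y') z = polar3 P x y z + polar3 P x y' z := by
  rw [polar3_comm_left, hP.polar3_add_left, polar3_comm_left, polar3_comm_left P y']

theorem IsHomogeneous.polar3_add_right (hP : P.IsHomogeneous 3) (x y z z' : σ → K) :
    polar3 P x y (z + z') = polar3 P x y z + polar3 P x y z' := by
  rw [polar3_comm_right, hP.polar3_add_mid, polar3_comm_right, polar3_comm_right P x z']

theorem IsHomogeneous.polar3_smul_mid (hP : P.IsHomogeneous 3) (t : K) (x y z : σ → K) :
    polar3 P x (t • y) z = t * polar3 P x y z := by
  rw [polar3_comm_left, hP.polar3_smul_left, polar3_comm_left]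

theorem IsHomogeneous.polar3_smul_right (hP : P.IsHomogeneous 3) (t : K) (x y z : σ → K) :
    polar3 P x y (t • z) = t * polar3 P x y z := by
  rw [polar3_comm_right, hP.polar3_smul_mid, polar3_comm_right]

theorem IsHomogeneous.polar2_add_left (hQ : Q.IsHomogeneous 2) (x x' y : σ → K) :
    polar2 Q (x + x') y = polar2 Q x y + polar2 Q x' y := by
  simpa using hQ.polar2_add_smul_left x x' y 1

theorem IsHomogeneous.polar2_smul_left (hQ : Q.IsHomogeneous 2) (t : K) (x y : σ → K) :
    polar2 Q (t • x) y = t * polar2 Q x y := by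
  have h0 : polar2 Q 0 y = 0 := by simpa using hQ.polar2_add_left 0 0 y
  simpa [h0] using hQ.polar2_add_smul_left 0 x y t

variable [CharZero K]

theorem IsHomogeneous.polar3_self (hP : P.IsHomogeneous 3) (x : σ → K) :
    polar3 P x x x = eval x P := by
  induction hP using IsHomogeneous.induction_on_toMultiset with
  | zero => simp [polar3]
  | add p q _ _ hp hq => rw [polar3_add, hp, hq, map_add]
  | monomial m r hm =>
    obtain ⟨i, j, k, hijk⟩ := Multiset.card_eq_three.mp hm
    simp only [polar3, eval_monomial_eq_mul_prod_toMultiset, hijk, Multiset.insert_eq_cons,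
      Multiset.map_cons, Multiset.map_singleton, Multiset.prod_cons, Multiset.prod_singleton,
      Pi.add_apply]
    ring

theorem IsHomogeneous.polar3_eq_zero_of_add (hP : P.IsHomogeneous 3) {x y z : σ → K}
    (hx : polar3 P x x z = 0) (hy : polar3 P y y z = 0) (hxy : polar3 P (x + y) (x + y) z = 0) :
    polar3 P x y z = 0 := by
  rw [hP.polar3_add_left, hP.polar3_add_mid, hP.polar3_add_mid, polar3_comm_left P y x, hx,
    hy] at hxy
  simpa using hxy

theorem IsHomogeneous.eval_add_smul_polar3 (hP : P.IsHomogeneous 3) (a b : σ → K) (t : K) :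
    eval (a + t • b) P =
      eval a P + 3 * t * polar3 P a a b + 3 * t ^ 2 * polar3 P a b b + t ^ 3 * eval b P := by
  rw [← hP.polar3_self (a + t • b), ← hP.polar3_self a, ← hP.polar3_self b]
  simp only [hP.polar3_add_left, hP.polar3_add_mid, hP.polar3_add_right, hP.polar3_smul_left,
    hP.polar3_smul_mid, hP.polar3_smul_right]
  rw [polar3_comm_right P a b a, polar3_comm_left P b a a, polar3_comm_right P a b a,
    polar3_comm_left P b a b, polar3_comm_right P b b a, polar3_comm_left P b a b]
  ring

theorem IsHomogeneous.eval_add_smul_polar2 (hQ : Q.IsHomogeneous 2) (a b : σ → K) (t : K) :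
    eval (a + t • b) Q = eval a Q + 2 * t * polar2 Q a b + t ^ 2 * eval b Q := by
  calc eval (a + t • b) Q = eval a Q + 2 * polar2 Q a (t • b) + eval (t • b) Q := by
        unfold polar2; ring
    _ = _ := by rw [polar2_comm, hQ.polar2_smul_left, polar2_comm, hQ.eval_smul]; ring

theorem coeffs_eq_of_forall_cubic_eq {a₀ a₁ a₂ a₃ b₀ b₁ b₂ b₃ : K}
    (h : ∀ t : K, a₀ + a₁ * t + a₂ * t ^ 2 + a₃ * t ^ 3 = b₀ + b₁ * t + b₂ * t ^ 2 + b₃ * t ^ 3) :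
    a₀ = b₀ ∧ a₁ = b₁ ∧ a₂ = b₂ ∧ a₃ = b₃ := by
  refine ⟨by linear_combination h 0, ?_, ?_, ?_⟩
  · linear_combination h 1 - (1 / 3 : K) * h (-1) - (1 / 6 : K) * h 2 - (1 / 2 : K) * h 0
  · linear_combination (1 / 2 : K) * h 1 + (1 / 2 : K) * h (-1) - h 0
  · linear_combination
      (1 / 6 : K) * h 2 + (1 / 2 : K) * h 0 - (1 / 2 : K) * h 1 - (1 / 6 : K) * h (-1)

theorem IsHomogeneous.eval_shiftComponent_of_three (hP : P.IsHomogeneous 3) (a y : σ → K) :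
    eval y (shiftComponent 1 a P) = 3 * polar3 P a a y ∧
      eval y (shiftComponent 2 a P) = 3 * polar3 P a y y := by
  let e k := eval y (shiftComponent k a P)
  have h (t : K) : e 0 + e 1 * t + e 2 * t ^ 2 + e 3 * t ^ 3 =
      eval a P + 3 * polar3 P a a y * t + 3 * polar3 P a y y * t ^ 2 + eval y P * t ^ 3 := by
    have h := hP.eval_add_smul_eq_sum a y t
    rw [hP.eval_add_smul_polar3, Finset.sum_range_succ, Finset.sum_range_succ,
      Finset.sum_range_succ, Finset.sum_range_one] at h
    linear_combination -h
  obtain ⟨-, h1, h2, -⟩ := coeffs_eq_of_forall_cubic_eq h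
  exact ⟨h1, h2⟩

theorem IsHomogeneous.eval_shiftComponent_one_of_two (hP : P.IsHomogeneous 2) (a y : σ → K) :
    eval y (shiftComponent 1 a P) = 2 * polar2 P a y := by
  let e k := eval y (shiftComponent k a P)
  have h (t : K) : e 0 + e 1 * t + e 2 * t ^ 2 + 0 * t ^ 3 =
      eval a P + 2 * polar2 P a y * t + eval y P * t ^ 2 + 0 * t ^ 3 := by
    have h := hP.eval_add_smul_eq_sum a y t
    rw [hP.eval_add_smul_polar2, Finset.sum_range_succ, Finset.sum_range_succ,
      Finset.sum_range_one] at h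
    linear_combination -h
  exact (coeffs_eq_of_forall_cubic_eq h).2.1

end Polar

end MvPolynomial

theorem zpow_three_mul {G : Type*} [DivisionMonoid G] (x : G) (s : ℤ) :
    x ^ (3 * s) = (x ^ s) ^ 3 := by
  rw [mul_comm, zpow_mul, zpow_ofNat]

local notation "ρ" => PadicInt.toZModPow (p := 3) 2

namespace PadicInt

theorem toZModPow_two_eq_zero_iff {x : ℤ_[3]} : ρ x = 0 ↔ 9 ∣ x := by
  have h := ker_toZModPow (p := 3) 2
  rw [Nat.cast_ofNat] at h
  rw [← RingHom.mem_ker, h, Ideal.mem_span_singleton]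
  norm_num

theorem toZModPow_three_mul (x : ℤ_[3]) : ρ (3 * x) = 3 * ρ x := by
  rw [map_mul, map_ofNat]

theorem three_mul_toZModPow_eq_zero_iff {x : ℤ_[3]} : 3 * ρ x = 0 ↔ 3 ∣ x := by
  rw [← toZModPow_three_mul, toZModPow_two_eq_zero_iff, show (9 : ℤ_[3]) = 3 * 3 by norm_num,
    mul_dvd_mul_iff_left (by norm_num : (3 : ℤ_[3]) ≠ 0)]

theorem isUnit_iff_three_mul_toZModPow_ne_zero {x : ℤ_[3]} : IsUnit x ↔ 3 * ρ x ≠ 0 := by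
  have h := norm_lt_one_iff_dvd (p := 3) x
  rw [Nat.cast_ofNat] at h
  rw [ne_eq, three_mul_toZModPow_eq_zero_iff, ← h, ← not_isUnit_iff, not_not]

theorem exists_eq_three_mul_unit {x : ℤ_[3]} (h0 : ρ x ≠ 0) (h3 : 3 * ρ x = 0) :
    ∃ w : ℤ_[3]ˣ, x = 3 * w := by
  obtain ⟨w, rfl⟩ := three_mul_toZModPow_eq_zero_iff.mp h3
  refine ⟨(isUnit_iff_three_mul_toZModPow_ne_zero.mpr fun hw => h0 ?_).unit, rfl⟩
  rw [toZModPow_three_mul, hw]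

theorem three_mul_norm_lt_one (w : ℤ_[3]) : ‖3 * w‖ < 1 := by
  rw [norm_lt_one_iff_dvd]
  exact dvd_mul_right _ _

theorem norm_one_add_three_mul (w : ℤ_[3]) : ‖1 + 3 * w‖ = 1 := by
  have h := three_mul_norm_lt_one w
  rw [norm_add_eq_max_of_ne (by rw [norm_one]; exact h.ne'), norm_one, max_eq_left h.le]

theorem exists_pow_three_eq_of_toZModPow_eq_one {u : ℤ_[3]} (hu : ρ u = 1) :
    ∃ c : ℤ_[3], c ^ 3 = u := by
  obtain ⟨e, he⟩ : ∃ e, e * 3 ^ 2 = u - 1 := by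
    have h := ker_toZModPow (p := 3) 2
    rw [Nat.cast_ofNat] at h
    rw [← Ideal.mem_span_singleton', ← h, RingHom.mem_ker, map_sub, hu, map_one, sub_self]
  -- Hensel's lemma does not apply to `X ^ 3 - u` at `1`, whose derivative `3` is too small.
  -- Instead `(1 + 3 z) ^ 3 = 1 + 9 (z + 3 z ^ 2 + 3 z ^ 3)`, and `F` has a simple root mod `3`.
  let F : Polynomial ℤ_[3] := .C 3 * .X ^ 3 + .C 3 * .X ^ 2 + .X - .C e
  have hF : ‖F.aeval e‖ < ‖F.derivative.aeval e‖ ^ 2 := by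
    have h1 : F.aeval e = 3 * (e ^ 3 + e ^ 2) := by simp [F]; ring
    have h2 : F.derivative.aeval e = 1 + 3 * (3 * e ^ 2 + 2 * e) := by simp [F]; ring
    rw [h1, h2, norm_one_add_three_mul, one_pow]
    exact three_mul_norm_lt_one _
  obtain ⟨z, hz, -⟩ := hensels_lemma hF
  refine ⟨1 + 3 * z, ?_⟩
  have : 3 * z ^ 3 + 3 * z ^ 2 + z - e = 0 := by simpa [F] using hz
  linear_combination 9 * this + he

theorem exists_pow_three_eq {u : ℤ_[3]} (hu : ρ u = 1 ∨ ρ u = -1) : ∃ c : ℤ_[3], c ^ 3 = u := by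
  rcases hu with hu | hu
  · exact exists_pow_three_eq_of_toZModPow_eq_one hu
  · obtain ⟨c, hc⟩ := exists_pow_three_eq_of_toZModPow_eq_one (u := -u)
      (by rw [map_neg, hu, neg_neg])
    exact ⟨-c, by rw [neg_pow, hc]; ring⟩

end PadicInt

namespace Padic

variable {p : ℕ} [Fact p.Prime]

theorem valuation_coe_units (u : ℤ_[p]ˣ) : ((u : ℤ_[p]) : ℚ_[p]).valuation = 0 := by
  have h1 := (norm_le_one_iff_val_nonneg _).mp (u : ℤ_[p]).norm_le_one
  have h2 := (norm_le_one_iff_val_nonneg _).mp (↑u⁻¹ : ℤ_[p]).norm_le_one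
  have h := valuation_mul (x := ((u : ℤ_[p]) : ℚ_[p])) (y := ((↑u⁻¹ : ℤ_[p]) : ℚ_[p]))
    (by simp) (by simp)
  rw [← PadicInt.coe_mul, Units.mul_inv, PadicInt.coe_one, valuation_one] at h
  omega

theorem exists_eq_mul_zpow_mul_unit {x y : ℚ_[p]} (hx : x ≠ 0) (hy : y ≠ 0) :
    ∃ u : ℤ_[p]ˣ, y = x * (p : ℚ_[p]) ^ (y.valuation - x.valuation) * (u : ℤ_[p]) := by
  have hp : (p : ℚ_[p]) ≠ 0 := by exact_mod_cast (Fact.out : p.Prime).ne_zero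
  have hp' : (p : ℝ) ≠ 0 := by exact_mod_cast (Fact.out : p.Prime).ne_zero
  have hu : ‖y / x * (p : ℚ_[p]) ^ (x.valuation - y.valuation)‖ = 1 := by
    rw [norm_mul, norm_div, norm_eq_zpow_neg_valuation hx, norm_eq_zpow_neg_valuation hy,
      norm_p_zpow, ← zpow_sub₀ hp', ← zpow_add₀ hp']
    simp
  refine ⟨PadicInt.mkUnits hu, ?_⟩
  rw [PadicInt.mkUnits_eq, mul_comm (y / x), ← mul_assoc, mul_assoc x, ← zpow_add₀ hp]
  field_simp
  simp

theorem exists_cube_mul_add_eq_zero_or_valuation_add_cube_mul {a b : ℚ_[3]} (ha : a ≠ 0)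
    (hb : b ≠ 0) (hab : a.valuation ≡ b.valuation [ZMOD 3]) :
    (∃ c, a * c ^ 3 + b = 0) ∨
      ∃ t, a + t ^ 3 * b ≠ 0 ∧ (a + t ^ 3 * b).valuation = a.valuation + 1 := by
  obtain ⟨s, hs⟩ := hab.dvd
  obtain ⟨u, hu⟩ := exists_eq_mul_zpow_mul_unit ha hb
  rw [hs, Nat.cast_ofNat, zpow_three_mul] at hu
  subst hu
  have key : ∀ y : ZMod 9, 3 * y ≠ 0 → (y = 1 ∨ y = -1) ∨
      ∃ ε ∈ ({1, -1} : Finset ℤ), 1 + ε * y ≠ 0 ∧ 3 * (1 + ε * y) = 0 := by decide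
  rcases key _ (PadicInt.isUnit_iff_three_mul_toZModPow_ne_zero.mp u.isUnit) with
    hu | ⟨ε, hε, h0, h3⟩
  · left
    obtain ⟨c, hc⟩ := PadicInt.exists_pow_three_eq (u := -u) (by
      rw [map_neg]; rcases hu with h | h <;> simp [h])
    refine ⟨3 ^ s * c, ?_⟩
    rw [mul_pow, ← PadicInt.coe_pow, hc]
    push_cast
    ring
  · right
    obtain ⟨w, hw⟩ := PadicInt.exists_eq_three_mul_unit (x := 1 + ε * u)
      (by simpa using h0) (by simpa using h3)
    have hε : (ε : ℚ_[3]) ^ 3 = ε := by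
      simp only [Finset.mem_insert, Finset.mem_singleton] at hε
      rcases hε with rfl | rfl <;> norm_num
    have hw' : (1 + ε * u : ℚ_[3]) = 3 * w := by exact_mod_cast congrArg ((↑) : ℤ_[3] → ℚ_[3]) hw
    have heq : a + (ε * (3 ^ s)⁻¹) ^ 3 * (a * (3 ^ s) ^ 3 * u) = a * 3 * w := by
      rw [mul_assoc a 3, ← hw', mul_pow, inv_pow, hε]
      field_simp
    refine ⟨ε * (3 ^ s)⁻¹, ?_, ?_⟩
    · rw [heq]; simp [ha]
    · rw [heq, valuation_mul (by simp [ha]) (by simp), valuation_mul ha (by norm_num),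
        valuation_coe_units, valuation_ofNat, padicValNat_self]
      push_cast
      ring

theorem exists_cubic_zero_of_valuation_modEq {a b c : ℚ_[3]} (ha : a ≠ 0) (hb : b ≠ 0)
    (hc : c ≠ 0) (hab : a.valuation ≡ b.valuation [ZMOD 3])
    (hac : a.valuation + 1 ≡ c.valuation [ZMOD 3]) :
    ∃ x y z, ¬(x = 0 ∧ y = 0 ∧ z = 0) ∧ a * x ^ 3 + b * y ^ 3 + c * z ^ 3 = 0 := by
  obtain ⟨s, hs⟩ := hab.dvd
  obtain ⟨t, ht⟩ := hac.dvd
  obtain ⟨u, hu⟩ := exists_eq_mul_zpow_mul_unit ha hb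
  obtain ⟨w, hw⟩ := exists_eq_mul_zpow_mul_unit ha hc
  rw [hs, Nat.cast_ofNat, zpow_three_mul] at hu
  rw [show c.valuation - a.valuation = 3 * t + 1 by omega, Nat.cast_ofNat,
    zpow_add₀ (by norm_num), zpow_three_mul, zpow_one] at hw
  subst hu hw
  have key : ∀ y z : ZMod 9, 3 * y ≠ 0 → 3 * z ≠ 0 →
      ∃ δ ∈ ({1, -1} : Finset ℤ), ∃ η ∈ ({0, 1, -1} : Finset ℤ),
        δ * y + 3 * η * z = 1 ∨ δ * y + 3 * η * z = -1 := by decide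
  obtain ⟨δ, hδ, η, hη, h⟩ := key _ _ (PadicInt.isUnit_iff_three_mul_toZModPow_ne_zero.mp u.isUnit)
    (PadicInt.isUnit_iff_three_mul_toZModPow_ne_zero.mp w.isUnit)
  obtain ⟨x, hx⟩ := PadicInt.exists_pow_three_eq (u := -(δ * u + 3 * η * w)) (by
    simp only [map_neg, map_add, map_mul, map_intCast, map_ofNat, neg_eq_iff_eq_neg, neg_neg]
    exact h.symm)
  have hδ3 : (δ : ℚ_[3]) ^ 3 = δ := by
    simp only [Finset.mem_insert, Finset.mem_singleton] at hδ
    rcases hδ with rfl | rfl <;> norm_num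
  have hη3 : (η : ℚ_[3]) ^ 3 = η := by
    simp only [Finset.mem_insert, Finset.mem_singleton] at hη
    rcases hη with rfl | rfl | rfl <;> norm_num
  have hδ0 : (δ : ℚ_[3]) ≠ 0 := by
    simp only [Finset.mem_insert, Finset.mem_singleton] at hδ
    rcases hδ with rfl | rfl <;> norm_num
  have hx' : (x : ℚ_[3]) ^ 3 = -(δ * u + 3 * η * w) := by
    exact_mod_cast congrArg ((↑) : ℤ_[3] → ℚ_[3]) hx
  refine ⟨x, δ * (3 ^ s)⁻¹, η * (3 ^ t)⁻¹, fun h0 => ?_, ?_⟩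
  · exact mul_ne_zero hδ0 (inv_ne_zero (zpow_ne_zero _ (by norm_num))) h0.2.1
  · rw [mul_pow, mul_pow, inv_pow, inv_pow, hδ3, hη3, hx']
    field_simp
    ring

end Padic

theorem Int.modEq_three_cases (a b : ℤ) :
    a ≡ b [ZMOD 3] ∨ a + 1 ≡ b [ZMOD 3] ∨ a + 2 ≡ b [ZMOD 3] := by
  simp only [Int.ModEq]; omega

namespace FormSystem

section General

variable {σ ι κ μ K : Type*} [Field K]

variable (C : ι → MvPolynomial σ K) (Q : κ → MvPolynomial σ K) (L : μ → MvPolynomial σ K)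

def HasCommonZero : Prop :=
  ∃ x : σ → K, x ≠ 0 ∧ (∀ i, eval x (C i) = 0) ∧ (∀ i, eval x (Q i) = 0) ∧ ∀ i, eval x (L i) = 0

def IsZeroExcept (j₀ : ι) (v : σ → K) : Prop :=
  (∀ j ≠ j₀, eval v (C j) = 0) ∧ (∀ i, eval v (Q i) = 0) ∧ ∀ i, eval v (L i) = 0

def IsOrthogonal (a b : σ → K) : Prop :=
  (∀ j, polar3 (C j) a a b = 0 ∧ polar3 (C j) a b b = 0) ∧ ∀ i, polar2 (Q i) a b = 0

def IsTriOrthogonal (a b c : σ → K) : Prop :=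
  ∀ j, polar3 (C j) a b c = 0

def ExtendsOrthogonally (j₀ : ι) : Prop :=
  ∀ b₀ b₁ b₂ : σ → K, ∃ r, r ≠ 0 ∧ IsZeroExcept C Q L j₀ r ∧
    IsOrthogonal C Q b₀ r ∧ IsOrthogonal C Q b₁ r ∧ IsOrthogonal C Q b₂ r ∧
    IsTriOrthogonal C b₀ b₁ r ∧ IsTriOrthogonal C b₀ b₂ r ∧ IsTriOrthogonal C b₁ b₂ r

variable {C Q L} {a b c : σ → K}

theorem IsOrthogonal.symm (h : IsOrthogonal C Q a b) : IsOrthogonal C Q b a :=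
  ⟨fun j => ⟨by rw [polar3_comm_right, polar3_comm_left]; exact (h.1 j).2,
    by rw [polar3_comm_left, polar3_comm_right]; exact (h.1 j).1⟩,
    fun i => by rw [polar2_comm]; exact h.2 i⟩

theorem IsTriOrthogonal.swap_left (h : IsTriOrthogonal C a b c) : IsTriOrthogonal C b a c :=
  fun j => by rw [polar3_comm_left]; exact h j

theorem IsTriOrthogonal.swap_right (h : IsTriOrthogonal C a b c) : IsTriOrthogonal C a c b :=
  fun j => by rw [polar3_comm_right]; exact h j

theorem IsOrthogonal.smul_left (hC : ∀ j, (C j).IsHomogeneous 3)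
    (hQ : ∀ i, (Q i).IsHomogeneous 2) (h : IsOrthogonal C Q a b) (x : K) :
    IsOrthogonal C Q (x • a) b :=
  ⟨fun j => ⟨by rw [(hC j).polar3_smul_left, (hC j).polar3_smul_mid, (h.1 j).1]; ring,
    by rw [(hC j).polar3_smul_left, (h.1 j).2, mul_zero]⟩,
    fun i => by rw [(hQ i).polar2_smul_left, h.2 i, mul_zero]⟩

theorem IsTriOrthogonal.smul_left (hC : ∀ j, (C j).IsHomogeneous 3)
    (h : IsTriOrthogonal C a b c) (x : K) : IsTriOrthogonal C (x • a) b c :=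
  fun j => by rw [(hC j).polar3_smul_left, h j, mul_zero]

theorem IsOrthogonal.add_smul_left (hC : ∀ j, (C j).IsHomogeneous 3)
    (hQ : ∀ i, (Q i).IsHomogeneous 2) (hac : IsOrthogonal C Q a c) (hbc : IsOrthogonal C Q b c)
    (habc : IsTriOrthogonal C a b c) (t : K) : IsOrthogonal C Q (a + t • b) c := by
  refine ⟨fun j => ⟨?_, ?_⟩, fun i => ?_⟩
  · simp only [(hC j).polar3_add_left, (hC j).polar3_add_mid, (hC j).polar3_smul_left,
      (hC j).polar3_smul_mid, polar3_comm_left (C j) b a, (hac.1 j).1, (hbc.1 j).1, habc j]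
    ring
  · rw [(hC j).polar3_add_left, (hC j).polar3_smul_left, (hac.1 j).2, (hbc.1 j).2]; ring
  · rw [(hQ i).polar2_add_left, (hQ i).polar2_smul_left, hac.2 i, hbc.2 i]; ring

variable {j₀ : ι}

theorem IsZeroExcept.smul (hC : ∀ j, (C j).IsHomogeneous 3)
    (hQ : ∀ i, (Q i).IsHomogeneous 2) (hL : ∀ i, (L i).IsHomogeneous 1)
    (h : IsZeroExcept C Q L j₀ a) (x : K) : IsZeroExcept C Q L j₀ (x • a) :=
  ⟨fun j hj => by rw [(hC j).eval_smul, h.1 j hj, mul_zero],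
    fun i => by rw [(hQ i).eval_smul, h.2.1 i, mul_zero],
    fun i => by rw [(hL i).eval_smul, h.2.2 i, mul_zero]⟩

theorem IsZeroExcept.hasCommonZero (h : IsZeroExcept C Q L j₀ a) (ha : a ≠ 0)
    (h₀ : eval a (C j₀) = 0) : HasCommonZero C Q L := by
  refine ⟨a, ha, fun j => ?_, h.2⟩
  by_cases hj : j = j₀
  · rw [hj, h₀]
  · exact h.1 j hj

variable [CharZero K]

theorem eval_add_smul_of_isOrthogonal (hC : ∀ j, (C j).IsHomogeneous 3)
    (h : IsOrthogonal C Q a b) (j : ι) (t : K) :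
    eval (a + t • b) (C j) = eval a (C j) + t ^ 3 * eval b (C j) := by
  rw [(hC j).eval_add_smul_polar3, (h.1 j).1, (h.1 j).2]; ring

theorem IsZeroExcept.add_smul (hC : ∀ j, (C j).IsHomogeneous 3)
    (hQ : ∀ i, (Q i).IsHomogeneous 2) (hL : ∀ i, (L i).IsHomogeneous 1)
    (ha : IsZeroExcept C Q L j₀ a) (hb : IsZeroExcept C Q L j₀ b)
    (hab : IsOrthogonal C Q a b) (t : K) : IsZeroExcept C Q L j₀ (a + t • b) :=
  ⟨fun j hj => by rw [eval_add_smul_of_isOrthogonal hC hab, ha.1 j hj, hb.1 j hj]; ring,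
    fun i => by rw [(hQ i).eval_add_smul_polar2, ha.2.1 i, hb.2.1 i, hab.2 i]; ring,
    fun i => by rw [(hL i).eval_add_smul_of_degree_one, ha.2.2 i, hb.2.2 i]; ring⟩

theorem hasCommonZero_of_cube_mul_add (hC : ∀ j, (C j).IsHomogeneous 3)
    (hQ : ∀ i, (Q i).IsHomogeneous 2) (hL : ∀ i, (L i).IsHomogeneous 1)
    (ha : IsZeroExcept C Q L j₀ a) (hb : IsZeroExcept C Q L j₀ b) (hab : IsOrthogonal C Q a b)
    (hb₀ : eval b (C j₀) ≠ 0)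
    {x : K} (hx : eval a (C j₀) * x ^ 3 + eval b (C j₀) = 0) : HasCommonZero C Q L := by
  refine (hb.add_smul hC hQ hL ha hab.symm x).hasCommonZero (fun h0 => hb₀ ?_) ?_
  · have h := congrArg (fun v => polar3 (C j₀) v b b) h0
    simpa only [(hC j₀).polar3_add_left, (hC j₀).polar3_smul_left, (hC j₀).polar3_self,
      (hC j₀).polar3_zero_left, (hab.1 j₀).2, mul_zero, add_zero] using h
  · rw [eval_add_smul_of_isOrthogonal hC hab.symm]; linear_combination hx

theorem hasCommonZero_of_isOrthogonal_triple (hC : ∀ j, (C j).IsHomogeneous 3)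
    (hQ : ∀ i, (Q i).IsHomogeneous 2) (hL : ∀ i, (L i).IsHomogeneous 1)
    (ha : IsZeroExcept C Q L j₀ a) (hb : IsZeroExcept C Q L j₀ b) (hc : IsZeroExcept C Q L j₀ c)
    (hab : IsOrthogonal C Q a b) (hac : IsOrthogonal C Q a c) (hbc : IsOrthogonal C Q b c)
    (habc : IsTriOrthogonal C a b c)
    (ha₀ : eval a (C j₀) ≠ 0) (hb₀ : eval b (C j₀) ≠ 0) (hc₀ : eval c (C j₀) ≠ 0)
    {x y z : K} (hxyz : ¬(x = 0 ∧ y = 0 ∧ z = 0))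
    (h : eval a (C j₀) * x ^ 3 + eval b (C j₀) * y ^ 3 + eval c (C j₀) * z ^ 3 = 0) :
    HasCommonZero C Q L := by
  have hab' := hab.smul_left hC hQ x
  have habc' := (hac.smul_left hC hQ x).add_smul_left hC hQ hbc (habc.smul_left hC x) y
  refine (((ha.smul hC hQ hL x).add_smul hC hQ hL hb hab' y).add_smul hC hQ hL hc habc' z
    ).hasCommonZero (fun h0 => hxyz ?_) ?_
  · have hG := hC j₀
    have hba : polar3 (C j₀) b a a = 0 := by
      rw [polar3_comm_left, polar3_comm_right]; exact (hab.1 j₀).1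
    have hca : polar3 (C j₀) c a a = 0 := by
      rw [polar3_comm_left, polar3_comm_right]; exact (hac.1 j₀).1
    have hcb : polar3 (C j₀) c b b = 0 := by
      rw [polar3_comm_left, polar3_comm_right]; exact (hbc.1 j₀).1
    have hdiag (d : σ → K) := congrArg (fun v => polar3 (C j₀) v d d) h0
    simp only [hG.polar3_add_left, hG.polar3_smul_left, hG.polar3_zero_left] at hdiag
    have hxa := hdiag a
    have hyb := hdiag b
    have hzc := hdiag c
    rw [hG.polar3_self, hba, hca] at hxa
    rw [hG.polar3_self, (hab.1 j₀).2, hcb] at hyb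
    rw [hG.polar3_self, (hac.1 j₀).2, (hbc.1 j₀).2] at hzc
    refine ⟨?_, ?_, ?_⟩
    · simpa [ha₀] using hxa
    · simpa [hb₀] using hyb
    · simpa [hc₀] using hzc
  · rw [eval_add_smul_of_isOrthogonal hC habc', eval_add_smul_of_isOrthogonal hC hab',
      (hC j₀).eval_smul]
    linear_combination h

end General

section Augmented

variable {σ K : Type*} [Field K] {r₃ r₂ r₁ : ℕ} (b : Fin 3 → σ → K)
  (C : Fin r₃ → MvPolynomial σ K) (Q : Fin r₂ → MvPolynomial σ K) (L : Fin r₁ → MvPolynomial σ K)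

/-- The linear parts of `C j` at the sums `b s + b t` recover the mixed polar values
`polar3 (C j) (b s) (b t)`, see `IsHomogeneous.polar3_eq_zero_of_add`. -/
def pairSums : Fin 6 → σ → K :=
  ![b 0, b 1, b 2, b 0 + b 1, b 0 + b 2, b 1 + b 2]

noncomputable def augmentedQuadratics : Fin (3 * r₃ + r₂) → MvPolynomial σ K :=
  Fin.append
    (fun e => shiftComponent 2 (b (finProdFinEquiv.symm e).1) (C (finProdFinEquiv.symm e).2)) Q

noncomputable def augmentedLinears : Fin (6 * r₃ + 3 * r₂ + r₁) → MvPolynomial σ K :=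
  Fin.append (Fin.append
    (fun e => shiftComponent 1 (pairSums b (finProdFinEquiv.symm e).1)
      (C (finProdFinEquiv.symm e).2))
    (fun e => shiftComponent 1 (b (finProdFinEquiv.symm e).1) (Q (finProdFinEquiv.symm e).2))) L

variable {b C Q L}

theorem augmentedQuadratics_isHomogeneous (hQ : ∀ i, (Q i).IsHomogeneous 2)
    (e : Fin (3 * r₃ + r₂)) : (augmentedQuadratics b C Q e).IsHomogeneous 2 := by
  induction e using Fin.addCases with
  | left e =>
    simpa only [augmentedQuadratics, Fin.append_left] using shiftComponent_isHomogeneous ..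
  | right i => simpa only [augmentedQuadratics, Fin.append_right] using hQ i

theorem augmentedLinears_isHomogeneous (hL : ∀ i, (L i).IsHomogeneous 1)
    (e : Fin (6 * r₃ + 3 * r₂ + r₁)) : (augmentedLinears b C Q L e).IsHomogeneous 1 := by
  induction e using Fin.addCases with
  | left e =>
    induction e using Fin.addCases with
    | left e => simpa only [augmentedLinears, Fin.append_left] using shiftComponent_isHomogeneous ..
    | right e =>
      simpa only [augmentedLinears, Fin.append_left, Fin.append_right] using
        shiftComponent_isHomogeneous ..
  | right i => simpa only [augmentedLinears, Fin.append_right] using hL i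

variable [CharZero K] {x : σ → K}

theorem polar3_eq_zero_of_augmentedQuadratics (hC : ∀ j, (C j).IsHomogeneous 3)
    (h : ∀ e, eval x (augmentedQuadratics b C Q e) = 0) :
    (∀ s j, polar3 (C j) (b s) x x = 0) ∧ ∀ i, eval x (Q i) = 0 := by
  obtain ⟨h₂, hQ⟩ := (Fin.forall_fin_add _).mp h
  simp only [augmentedQuadratics, Fin.append_left, Fin.append_right] at h₂ hQ
  refine ⟨fun s j => ?_, hQ⟩
  simpa [(hC j).eval_shiftComponent_of_three] using h₂ (finProdFinEquiv (s, j))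

theorem polar_eq_zero_of_augmentedLinears (hC : ∀ j, (C j).IsHomogeneous 3)
    (hQ : ∀ i, (Q i).IsHomogeneous 2) (h : ∀ e, eval x (augmentedLinears b C Q L e) = 0) :
    (∀ s j, polar3 (C j) (pairSums b s) (pairSums b s) x = 0) ∧
      (∀ s i, polar2 (Q i) (b s) x = 0) ∧ ∀ i, eval x (L i) = 0 := by
  obtain ⟨h', hL⟩ := (Fin.forall_fin_add _).mp h
  obtain ⟨h₃, h₂⟩ := (Fin.forall_fin_add _).mp h'
  simp only [augmentedLinears, Fin.append_left, Fin.append_right] at h₃ h₂ hL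
  refine ⟨fun s j => ?_, fun s i => ?_, hL⟩
  · simpa [(hC j).eval_shiftComponent_of_three] using h₃ (finProdFinEquiv (s, j))
  · simpa [(hQ i).eval_shiftComponent_one_of_two] using h₂ (finProdFinEquiv (s, i))

end Augmented

theorem extendsOrthogonally_of_forall_hasCommonZero {σ K : Type*} [Field K] [CharZero K]
    {r₃ r₂ r₁ : ℕ} {C : Fin r₃ → MvPolynomial σ K} {Q : Fin r₂ → MvPolynomial σ K}
    {L : Fin r₁ → MvPolynomial σ K} (hr₃ : 0 < r₃)
    (hC : ∀ j, (C j).IsHomogeneous 3) (hQ : ∀ i, (Q i).IsHomogeneous 2)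
    (hL : ∀ i, (L i).IsHomogeneous 1)
    (H : ∀ (C' : Fin (r₃ - 1) → MvPolynomial σ K) (Q' : Fin (3 * r₃ + r₂) → MvPolynomial σ K)
      (L' : Fin (6 * r₃ + 3 * r₂ + r₁) → MvPolynomial σ K),
      (∀ i, (C' i).IsHomogeneous 3) → (∀ i, (Q' i).IsHomogeneous 2) →
      (∀ i, (L' i).IsHomogeneous 1) → HasCommonZero C' Q' L') :
    ExtendsOrthogonally C Q L ⟨0, hr₃⟩ := by
  intro b₀ b₁ b₂
  obtain ⟨x, hx, hxC, hxQ, hxL⟩ := H (fun i => C ⟨i + 1, by omega⟩)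
    (augmentedQuadratics ![b₀, b₁, b₂] C Q) (augmentedLinears ![b₀, b₁, b₂] C Q L)
    (fun i => hC _) (augmentedQuadratics_isHomogeneous hQ) (augmentedLinears_isHomogeneous hL)
  obtain ⟨hT₂, hQx⟩ := polar3_eq_zero_of_augmentedQuadratics hC hxQ
  obtain ⟨hT₁, hB, hLx⟩ := polar_eq_zero_of_augmentedLinears hC hQ hxL
  have hZ : IsZeroExcept C Q L ⟨0, hr₃⟩ x := by
    refine ⟨fun j hj => ?_, hQx, hLx⟩
    have hj' : (j : ℕ) ≠ 0 := fun h => hj (Fin.ext h)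
    rw [show j = ⟨(j - 1 : ℕ) + 1, by omega⟩ from Fin.ext (by simp; omega)]
    exact hxC ⟨j - 1, by omega⟩
  exact ⟨x, hx, hZ, ⟨fun j => ⟨hT₁ 0 j, hT₂ 0 j⟩, hB 0⟩, ⟨fun j => ⟨hT₁ 1 j, hT₂ 1 j⟩, hB 1⟩,
    ⟨fun j => ⟨hT₁ 2 j, hT₂ 2 j⟩, hB 2⟩,
    fun j => (hC j).polar3_eq_zero_of_add (hT₁ 0 j) (hT₁ 1 j) (hT₁ 3 j),
    fun j => (hC j).polar3_eq_zero_of_add (hT₁ 0 j) (hT₁ 2 j) (hT₁ 4 j),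
    fun j => (hC j).polar3_eq_zero_of_add (hT₁ 1 j) (hT₁ 2 j) (hT₁ 5 j)⟩

section Padic

variable {σ ι κ μ : Type*} {C : ι → MvPolynomial σ ℚ_[3]} {Q : κ → MvPolynomial σ ℚ_[3]}
  {L : μ → MvPolynomial σ ℚ_[3]} {j₀ : ι} {a b c : σ → ℚ_[3]}

local notation "γ" v => eval v (C j₀)

theorem ExtendsOrthogonally.hasCommonZero_or (hext : ExtendsOrthogonally C Q L j₀)
    (b₀ b₁ b₂ : σ → ℚ_[3]) : HasCommonZero C Q L ∨ ∃ r, IsZeroExcept C Q L j₀ r ∧ (γ r) ≠ 0 ∧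
      IsOrthogonal C Q b₀ r ∧ IsOrthogonal C Q b₁ r ∧ IsOrthogonal C Q b₂ r ∧
      IsTriOrthogonal C b₀ b₁ r ∧ IsTriOrthogonal C b₀ b₂ r ∧ IsTriOrthogonal C b₁ b₂ r := by
  obtain ⟨r, hr, hZ, h⟩ := hext b₀ b₁ b₂
  by_cases h₀ : (γ r) = 0
  · exact .inl (hZ.hasCommonZero hr h₀)
  · exact .inr ⟨r, hZ, h₀, h⟩

theorem hasCommonZero_of_valuation_modEq (hC : ∀ j, (C j).IsHomogeneous 3)
    (hQ : ∀ i, (Q i).IsHomogeneous 2) (hL : ∀ i, (L i).IsHomogeneous 1)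
    (ha : IsZeroExcept C Q L j₀ a) (hb : IsZeroExcept C Q L j₀ b) (hc : IsZeroExcept C Q L j₀ c)
    (hab : IsOrthogonal C Q a b) (hac : IsOrthogonal C Q a c) (hbc : IsOrthogonal C Q b c)
    (habc : IsTriOrthogonal C a b c)
    (ha₀ : (γ a) ≠ 0) (hb₀ : (γ b) ≠ 0) (hc₀ : (γ c) ≠ 0)
    (hvb : (γ a).valuation ≡ (γ b).valuation [ZMOD 3])
    (hvc : (γ a).valuation + 1 ≡ (γ c).valuation [ZMOD 3]) : HasCommonZero C Q L := by
  obtain ⟨x, y, z, hxyz, h⟩ := Padic.exists_cubic_zero_of_valuation_modEq ha₀ hb₀ hc₀ hvb hvc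
  exact hasCommonZero_of_isOrthogonal_triple hC hQ hL ha hb hc hab hac hbc habc ha₀ hb₀ hc₀ hxyz h

theorem hasCommonZero_or_exists_add_smul (hC : ∀ j, (C j).IsHomogeneous 3)
    (hQ : ∀ i, (Q i).IsHomogeneous 2) (hL : ∀ i, (L i).IsHomogeneous 1)
    (ha : IsZeroExcept C Q L j₀ a) (hb : IsZeroExcept C Q L j₀ b) (hab : IsOrthogonal C Q a b)
    (ha₀ : (γ a) ≠ 0) (hb₀ : (γ b) ≠ 0) (hv : (γ a).valuation ≡ (γ b).valuation [ZMOD 3]) :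
    HasCommonZero C Q L ∨ ∃ t : ℚ_[3], (γ (a + t • b)) ≠ 0 ∧
      (γ (a + t • b)).valuation = (γ a).valuation + 1 := by
  rcases Padic.exists_cube_mul_add_eq_zero_or_valuation_add_cube_mul ha₀ hb₀ hv with
    ⟨x, hx⟩ | ⟨t, ht⟩
  · exact .inl (hasCommonZero_of_cube_mul_add hC hQ hL ha hb hab hb₀ hx)
  · exact .inr ⟨t, by simpa only [eval_add_smul_of_isOrthogonal hC hab] using ht⟩

theorem hasCommonZero_of_valuation_add_one_add_two (hC : ∀ j, (C j).IsHomogeneous 3)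
    (hQ : ∀ i, (Q i).IsHomogeneous 2) (hL : ∀ i, (L i).IsHomogeneous 1)
    (hext : ExtendsOrthogonally C Q L j₀) (ha : IsZeroExcept C Q L j₀ a)
    (hb : IsZeroExcept C Q L j₀ b) (hc : IsZeroExcept C Q L j₀ c) (hab : IsOrthogonal C Q a b)
    (hac : IsOrthogonal C Q a c) (hbc : IsOrthogonal C Q b c)
    (ha₀ : (γ a) ≠ 0) (hb₀ : (γ b) ≠ 0) (hc₀ : (γ c) ≠ 0)
    (hvb : (γ a).valuation + 1 ≡ (γ b).valuation [ZMOD 3])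
    (hvc : (γ a).valuation + 2 ≡ (γ c).valuation [ZMOD 3]) : HasCommonZero C Q L := by
  obtain h | ⟨w, hw, hw₀, haw, hbw, hcw, habw, hacw, hbcw⟩ := hext.hasCommonZero_or a b c
  · exact h
  obtain hv | hv | hv := Int.modEq_three_cases (γ a).valuation (γ w).valuation
  · exact hasCommonZero_of_valuation_modEq hC hQ hL ha hw hb haw hab hbw.symm habw.swap_right
      ha₀ hw₀ hb₀ hv hvb
  · exact hasCommonZero_of_valuation_modEq hC hQ hL hb hw hc hbw hbc hcw.symm hbcw.swap_right
      hb₀ hw₀ hc₀ (hvb.symm.trans hv) (by simp only [Int.ModEq] at *; omega)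
  · exact hasCommonZero_of_valuation_modEq hC hQ hL hc hw ha hcw hac.symm haw.symm
      hacw.swap_left.swap_right hc₀ hw₀ ha₀ (hvc.symm.trans hv)
      (by simp only [Int.ModEq] at *; omega)

theorem hasCommonZero_of_valuation_add_one (hC : ∀ j, (C j).IsHomogeneous 3)
    (hQ : ∀ i, (Q i).IsHomogeneous 2) (hL : ∀ i, (L i).IsHomogeneous 1)
    (hext : ExtendsOrthogonally C Q L j₀) (ha : IsZeroExcept C Q L j₀ a)
    (hb : IsZeroExcept C Q L j₀ b) (hab : IsOrthogonal C Q a b)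
    (ha₀ : (γ a) ≠ 0) (hb₀ : (γ b) ≠ 0)
    (hv : (γ a).valuation + 1 ≡ (γ b).valuation [ZMOD 3]) : HasCommonZero C Q L := by
  obtain h | ⟨c, hc, hc₀, hac, hbc, -, habc, -⟩ := hext.hasCommonZero_or a b b
  · exact h
  obtain hvc | hvc | hvc := Int.modEq_three_cases (γ a).valuation (γ c).valuation
  · exact hasCommonZero_of_valuation_modEq hC hQ hL ha hc hb hac hab hbc.symm habc.swap_right
      ha₀ hc₀ hb₀ hvc hv
  · -- `γ b` and `γ c` lie in the same valuation class: either `b, c` already give a zero, or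
    -- `b + t • c` lies one class higher
    obtain h | ⟨t, hq₀, hvq⟩ :=
      hasCommonZero_or_exists_add_smul hC hQ hL hb hc hbc hb₀ hc₀ (hv.symm.trans hvc)
    · exact h
    obtain h | ⟨p, hp, hp₀, hap, hbp, hcp, habp, hacp, hbcp⟩ := hext.hasCommonZero_or a b c
    · exact h
    obtain hvp | hvp | hvp := Int.modEq_three_cases (γ a).valuation (γ p).valuation
    · exact hasCommonZero_of_valuation_modEq hC hQ hL ha hp hb hap hab hbp.symm habp.swap_right
        ha₀ hp₀ hb₀ hvp hv
    · have hq := hb.add_smul hC hQ hL hc hbc t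
      have hqa := hab.symm.add_smul_left hC hQ hac.symm habc.swap_left.swap_right t
      have hqp := hbp.add_smul_left hC hQ hcp hbcp t
      exact hasCommonZero_of_valuation_add_one_add_two hC hQ hL hext ha hp hq hap hqa.symm
        hqp.symm ha₀ hp₀ hq₀ hvp (by rw [hvq]; simp only [Int.ModEq] at *; omega)
    · exact hasCommonZero_of_valuation_modEq hC hQ hL hb hc hp hbc hbp hcp hbcp hb₀ hc₀ hp₀
        (hv.symm.trans hvc) (by simp only [Int.ModEq] at *; omega)
  · exact hasCommonZero_of_valuation_add_one_add_two hC hQ hL hext ha hb hc hab hac hbc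
      ha₀ hb₀ hc₀ hv hvc

theorem hasCommonZero_of_isOrthogonal (hC : ∀ j, (C j).IsHomogeneous 3)
    (hQ : ∀ i, (Q i).IsHomogeneous 2) (hL : ∀ i, (L i).IsHomogeneous 1)
    (hext : ExtendsOrthogonally C Q L j₀) (ha : IsZeroExcept C Q L j₀ a)
    (hb : IsZeroExcept C Q L j₀ b) (hab : IsOrthogonal C Q a b)
    (ha₀ : (γ a) ≠ 0) (hb₀ : (γ b) ≠ 0) : HasCommonZero C Q L := by
  obtain hv | hv | hv := Int.modEq_three_cases (γ a).valuation (γ b).valuation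
  · obtain h | ⟨t, hq₀, hvq⟩ := hasCommonZero_or_exists_add_smul hC hQ hL ha hb hab ha₀ hb₀ hv
    · exact h
    obtain h | ⟨c, hc, hc₀, hac, hbc, -, habc, -⟩ := hext.hasCommonZero_or a b b
    · exact h
    obtain hvc | hvc | hvc := Int.modEq_three_cases (γ a).valuation (γ c).valuation
    · have hq := ha.add_smul hC hQ hL hb hab t
      have hqc := hac.add_smul_left hC hQ hbc habc t
      exact hasCommonZero_of_valuation_add_one hC hQ hL hext hc hq hqc.symm hc₀ hq₀
        (by rw [hvq]; simp only [Int.ModEq] at *; omega)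
    · exact hasCommonZero_of_valuation_modEq hC hQ hL ha hb hc hab hac hbc habc ha₀ hb₀ hc₀ hv hvc
    · exact hasCommonZero_of_valuation_add_one hC hQ hL hext hc ha hac.symm hc₀ ha₀
        (by simp only [Int.ModEq] at *; omega)
  · exact hasCommonZero_of_valuation_add_one hC hQ hL hext ha hb hab ha₀ hb₀ hv
  · exact hasCommonZero_of_valuation_add_one hC hQ hL hext hb ha hab.symm hb₀ ha₀
      (by simp only [Int.ModEq] at *; omega)

theorem ExtendsOrthogonally.hasCommonZero (hC : ∀ j, (C j).IsHomogeneous 3)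
    (hQ : ∀ i, (Q i).IsHomogeneous 2) (hL : ∀ i, (L i).IsHomogeneous 1)
    (hext : ExtendsOrthogonally C Q L j₀) : HasCommonZero C Q L := by
  obtain h | ⟨a, ha, ha₀, -⟩ := hext.hasCommonZero_or 0 0 0
  · exact h
  obtain h | ⟨b, hb, hb₀, hab, -⟩ := hext.hasCommonZero_or a a a
  · exact h
  exact hasCommonZero_of_isOrthogonal hC hQ hL hext ha hb hab ha₀ hb₀

end Padic

end FormSystem

/-- Reduction V(r₃, r₂, r₁; 3) ≤ V(r₃ - 1, 3r₃ + r₂, 6r₃ + 3r₂ + r₁; 3). -/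
theorem cubic_reduction_p_three (r₃ r₂ r₁ : ℕ) (hr₃ : 1 ≤ r₃) (N : ℕ)
    (H : ∀ n : ℕ, n > N →
      ∀ (C : Fin (r₃ - 1) → MvPolynomial (Fin n) ℚ_[3])
        (Q : Fin (3 * r₃ + r₂) → MvPolynomial (Fin n) ℚ_[3])
        (L : Fin (6 * r₃ + 3 * r₂ + r₁) → MvPolynomial (Fin n) ℚ_[3]),
        (∀ i, (C i).IsHomogeneous 3) → (∀ i, (Q i).IsHomogeneous 2) →
        (∀ i, (L i).IsHomogeneous 1) →
        ∃ x : Fin n → ℚ_[3], x ≠ 0 ∧ (∀ i, MvPolynomial.eval x (C i) = 0) ∧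
          (∀ i, MvPolynomial.eval x (Q i) = 0) ∧ (∀ i, MvPolynomial.eval x (L i) = 0)) :
    ∀ n : ℕ, n > N →
      ∀ (C : Fin r₃ → MvPolynomial (Fin n) ℚ_[3])
        (Q : Fin r₂ → MvPolynomial (Fin n) ℚ_[3])
        (L : Fin r₁ → MvPolynomial (Fin n) ℚ_[3]),
        (∀ i, (C i).IsHomogeneous 3) → (∀ i, (Q i).IsHomogeneous 2) →
        (∀ i, (L i).IsHomogeneous 1) →
        ∃ x : Fin n → ℚ_[3], x ≠ 0 ∧ (∀ i, MvPolynomial.eval x (C i) = 0) ∧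
          (∀ i, MvPolynomial.eval x (Q i) = 0) ∧ (∀ i, MvPolynomial.eval x (L i) = 0) := by
  intro n hn C Q L hC hQ hL
  exact (FormSystem.extendsOrthogonally_of_forall_hasCommonZero hr₃ hC hQ hL
    (H n hn)).hasCommonZero hC hQ hL
end

section
/- Let a, b, c, d, e ∈ ℚ₂ be elements whose 2-adic valuations satisfy ν(a) = 0, ν(b) = 1, ν(c) = 2, ν(d) = 3 and ν(e) = 0. Then the diagonal quartic form a·x₁⁴ + b·x₂⁴ + c·x₃⁴ + d·x₄⁴ + e·x₅⁴ has a nontrivial zero over ℚ₂, i.e., there exist x₁, ..., x₅ ∈ ℚ₂, not all zero, with a·x₁⁴ + b·x₂⁴ + c·x₃⁴ + d·x₄⁴ + e·x₅⁴ = 0. -/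
/-!
Write the coefficients as `A, 2B, 4C, 8D, E` with `A, …, E` units of `ℤ₂` and take `x₁ = 1`.
Since `A + E` is even, one can choose `x₂, x₃, x₄ ∈ {0, 1}` one binary digit at a time so that
`S = A + 2B x₂⁴ + 4C x₃⁴ + 8D x₄⁴ + E ≡ 0 mod 16`. Then `x₅` must satisfy `x₅⁴ = 1 - S/E`, a unit
`≡ 1 mod 16`, and such units are fourth powers by Hensel's lemma.
-/

open Polynomial

namespace PadicInt

theorem two_dvd_add_of_isUnit {u w : ℤ_[2]} (hu : IsUnit u) (hw : IsUnit w) : 2 ∣ u + w := by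
  have toZMod_eq_one {z : ℤ_[2]} (hz : IsUnit z) : toZMod z = 1 := by
    have := hz.map toZMod
    generalize toZMod z = r at this
    fin_cases r
    · exact absurd this not_isUnit_zero
    · rfl
  have hmem : u + w ∈ IsLocalRing.maximalIdeal ℤ_[2] := by
    rw [← ker_toZMod, RingHom.mem_ker, map_add, toZMod_eq_one hu, toZMod_eq_one hw]
    decide
  simpa using (norm_lt_one_iff_dvd _).1 (mem_nonunits.1 hmem)

theorem exists_two_pow_succ_dvd_add {x : ℤ_[2]} {n : ℕ} (hx : 2 ^ n ∣ x) {u : ℤ_[2]}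
    (hu : IsUnit u) : ∃ t : ℤ_[2], 2 ^ (n + 1) ∣ x + u * 2 ^ n * t ^ 4 := by
  obtain ⟨w, rfl⟩ := hx
  by_cases hw : IsUnit w
  · obtain ⟨s, hs⟩ := two_dvd_add_of_isUnit hw hu
    exact ⟨1, s, by linear_combination (2 : ℤ_[2]) ^ n * hs⟩
  · obtain ⟨s, hs⟩ : 2 ∣ w := by simpa using (norm_lt_one_iff_dvd w).1 (not_isUnit_iff.1 hw)
    exact ⟨0, s, by linear_combination (2 : ℤ_[2]) ^ n * hs⟩

theorem exists_pow_four_eq_of_sixteen_dvd_sub_one {u : ℤ_[2]} (hu : 16 ∣ u - 1) :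
    ∃ x : ℤ_[2], x ^ 4 = u := by
  obtain ⟨y, hy⟩ := hu
  set F : ℤ_[2][X] := X ^ 4 - C u
  set r : ℤ_[2] := 1 + 4 * y
  have hr : IsUnit r := by
    refine IsLocalRing.isUnit_of_mem_nonunits_one_sub_self r (mem_nonunits.2 ?_)
    exact (norm_lt_one_iff_dvd _).2 ⟨-2 * y, by simp [r]; ring⟩
  -- `r` is a root of `F` modulo `2⁵`, while `F'(r) = 4r³` has norm `2⁻²`: Hensel applies.
  have hFr : 2 ^ 5 ∣ F.eval r := ⟨3 * y ^ 2 + 8 * y ^ 3 + 8 * y ^ 4, by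
    simp only [F, r, eval_sub, eval_pow, eval_X, eval_C]; linear_combination -hy⟩
  have hF'r : ‖F.derivative.eval r‖ = 2 ^ (-2 : ℤ) := by
    have h4 : ‖(4 : ℤ_[2])‖ = 2 ^ (-2 : ℤ) := by
      rw [show (4 : ℤ_[2]) = ((2 : ℕ) : ℤ_[2]) ^ 2 by norm_num, norm_p_pow]
      norm_num
    have hF' : F.derivative.eval r = 4 * r ^ 3 := by simp [F]; norm_num
    rw [hF', norm_mul, norm_pow, isUnit_iff.1 hr, h4, one_pow, mul_one]
  have hHensel : ‖F.eval r‖ < ‖F.derivative.eval r‖ ^ 2 := by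
    calc ‖F.eval r‖ ≤ 2 ^ (-5 : ℤ) := by
          exact_mod_cast (norm_le_pow_iff_mem_span_pow _ 5).2
            (Ideal.mem_span_singleton.2 (by exact_mod_cast hFr))
      _ < (2 ^ (-2 : ℤ)) ^ 2 := by norm_num
      _ = _ := by rw [hF'r]
  obtain ⟨x, hx, -⟩ := hensels_lemma hHensel
  exact ⟨x, by simpa [F, sub_eq_zero] using hx⟩

theorem exists_diagonal_quartic_zero {A B C D E : ℤ_[2]} (hA : IsUnit A) (hB : IsUnit B)
    (hC : IsUnit C) (hD : IsUnit D) (hE : IsUnit E) :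
    ∃ x₂ x₃ x₄ x₅ : ℤ_[2],
      A + B * 2 * x₂ ^ 4 + C * 2 ^ 2 * x₃ ^ 4 + D * 2 ^ 3 * x₄ ^ 4 + E * x₅ ^ 4 = 0 := by
  have h₁ : 2 ^ 1 ∣ A + E := by simpa using two_dvd_add_of_isUnit hA hE
  obtain ⟨x₂, h₂⟩ := exists_two_pow_succ_dvd_add h₁ hB
  obtain ⟨x₃, h₃⟩ := exists_two_pow_succ_dvd_add h₂ hC
  obtain ⟨x₄, h₄⟩ := exists_two_pow_succ_dvd_add h₃ hD
  set S := A + E + B * 2 ^ 1 * x₂ ^ 4 + C * 2 ^ (1 + 1) * x₃ ^ 4 + D * 2 ^ (1 + 1 + 1) * x₄ ^ 4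
  obtain ⟨v, hv⟩ := hE.exists_right_inv
  obtain ⟨x₅, hx₅⟩ : ∃ x₅ : ℤ_[2], x₅ ^ 4 = 1 - S * v :=
    exists_pow_four_eq_of_sixteen_dvd_sub_one (by norm_num at h₄; simpa using h₄.mul_right (-v))
  exact ⟨x₂, x₃, x₄, x₅, by rw [hx₅]; linear_combination (-S) * hv⟩

end PadicInt

theorem Padic.exists_eq_unit_mul_pow {p : ℕ} [Fact p.Prime] {x : ℚ_[p]} (hx : x ≠ 0) {n : ℕ}
    (hv : x.valuation = n) : ∃ u : ℤ_[p]ˣ, x = u * (p : ℚ_[p]) ^ n := by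
  have hle : ‖x‖ ≤ 1 := (norm_le_one_iff_val_nonneg x).2 (hv ▸ Int.natCast_nonneg n)
  set y : ℤ_[p] := ⟨x, hle⟩
  have hy : y ≠ 0 := fun h => hx (congrArg ((↑) : ℤ_[p] → ℚ_[p]) h)
  have hyv : y.valuation = n := by exact_mod_cast (PadicInt.valuation_coe y).symm.trans hv
  refine ⟨PadicInt.unitCoeff hy, ?_⟩
  have := congrArg ((↑) : ℤ_[p] → ℚ_[p]) (PadicInt.unitCoeff_spec hy)
  rw [hyv] at this
  exact_mod_cast this

/-- A diagonal dyadic quartic with coefficients of valuations 0, 1, 2, 3, 0 has a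
nontrivial zero. -/
theorem diagonal_quartic_dyadic (a b c d e : ℚ_[2])
    (ha0 : a ≠ 0) (hb0 : b ≠ 0) (hc0 : c ≠ 0) (hd0 : d ≠ 0) (he0 : e ≠ 0)
    (ha : a.valuation = 0) (hb : b.valuation = 1) (hc : c.valuation = 2)
    (hd : d.valuation = 3) (he : e.valuation = 0) :
    ∃ x₁ x₂ x₃ x₄ x₅ : ℚ_[2], ¬(x₁ = 0 ∧ x₂ = 0 ∧ x₃ = 0 ∧ x₄ = 0 ∧ x₅ = 0) ∧
      a * x₁ ^ 4 + b * x₂ ^ 4 + c * x₃ ^ 4 + d * x₄ ^ 4 + e * x₅ ^ 4 = 0 := by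
  obtain ⟨A, rfl⟩ := Padic.exists_eq_unit_mul_pow ha0 (n := 0) (by simpa using ha)
  obtain ⟨B, rfl⟩ := Padic.exists_eq_unit_mul_pow hb0 (n := 1) (by simpa using hb)
  obtain ⟨C, rfl⟩ := Padic.exists_eq_unit_mul_pow hc0 (n := 2) (by simpa using hc)
  obtain ⟨D, rfl⟩ := Padic.exists_eq_unit_mul_pow hd0 (n := 3) (by simpa using hd)
  obtain ⟨E, rfl⟩ := Padic.exists_eq_unit_mul_pow he0 (n := 0) (by simpa using he)
  obtain ⟨x₂, x₃, x₄, x₅, h⟩ := PadicInt.exists_diagonal_quartic_zero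
    A.isUnit B.isUnit C.isUnit D.isUnit E.isUnit
  refine ⟨1, x₂, x₃, x₄, x₅, fun h => one_ne_zero h.1, ?_⟩
  have := congrArg ((↑) : ℤ_[2] → ℚ_[2]) h
  simp only [Nat.cast_ofNat, one_pow, mul_one, pow_zero, pow_one] at this ⊢
  exact_mod_cast this
end

section
/- Let a, b, c ∈ ℚ₃ be elements whose 3-adic valuations satisfy ν(a) = 0, ν(b) = 0 and ν(c) = 1. Then the diagonal cubic form a·x³ + b·y³ + c·z³ has a nontrivial zero over ℚ₃, i.e., there exist x, y, z ∈ ℚ₃, not all zero, with a·x³ + b·y³ + c·z³ = 0. -/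
/-!
Dividing by `a` and writing `c = 3 a C`, it suffices to solve `x³ + B + 3 C z³ = 0` in `ℤ₃` for
units `B`, `C`. Every `u ≡ ±1 (mod 9)` is a cube: `(1 + 3s)³ = 1 + 9m` is the equation
`3s³ + 3s² + s = m`, whose derivative is a unit mod 3, so Hensel's lemma applies. A finite check
in `ZMod 9` gives `z` with `B + 3 C z³ ≡ ±1 (mod 9)`, and `x` is a cube root of `-(B + 3 C z³)`.
-/

open Polynomial

theorem ZMod.exists_add_three_mul_mul_pow_three_eq_one_or_neg_one :
    ∀ β γ : ZMod 9, IsUnit β → IsUnit γ →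
      ∃ e : ZMod 9, β + 3 * γ * e ^ 3 = 1 ∨ β + 3 * γ * e ^ 3 = -1 := by
  decide

namespace PadicInt

variable {p : ℕ} [Fact p.Prime]

theorem exists_isRoot_of_dvd_eval_of_not_dvd_eval_derivative {F : ℤ_[p][X]} {a : ℤ_[p]}
    (hF : (p : ℤ_[p]) ∣ F.eval a) (hF' : ¬(p : ℤ_[p]) ∣ F.derivative.eval a) :
    ∃ z, F.IsRoot z := by
  have hderiv : ‖F.derivative.eval a‖ = 1 :=
    (norm_le_one _).antisymm (not_lt.1 (mt (norm_lt_one_iff_dvd _).1 hF'))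
  have hnorm : ‖F.aeval a‖ < ‖F.derivative.aeval a‖ ^ 2 := by
    simpa [hderiv] using (norm_lt_one_iff_dvd _).2 hF
  obtain ⟨z, hz, -⟩ := hensels_lemma hnorm
  exact ⟨z, by simpa using hz⟩

theorem toZModPow_eq_zero_iff_dvd (n : ℕ) (x : ℤ_[p]) :
    toZModPow n x = 0 ↔ (p : ℤ_[p]) ^ n ∣ x := by
  rw [← RingHom.mem_ker, ker_toZModPow, Ideal.mem_span_singleton]

theorem exists_pow_three_eq_one_add_nine_mul (m : ℤ_[3]) : ∃ t : ℤ_[3], t ^ 3 = 1 + 9 * m := by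
  set F : ℤ_[3][X] := C 3 * X ^ 3 + C 3 * X ^ 2 + X - C m
  have hF : F.eval m = 3 * (m ^ 3 + m ^ 2) := by simp [F]; ring
  have hF' : F.derivative.eval m = 1 + 3 * (3 * m ^ 2 + 2 * m) := by simp [F]; ring
  have h3 : ((3 : ℕ) : ℤ_[3]) = 3 := Nat.cast_ofNat
  obtain ⟨s, hs⟩ := exists_isRoot_of_dvd_eval_of_not_dvd_eval_derivative (F := F) (a := m)
    (by rw [hF, ← h3]; exact dvd_mul_right _ _)
    (by rw [hF', ← h3, dvd_add_left (dvd_mul_right _ _)]; exact prime_p.not_dvd_one)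
  refine ⟨1 + 3 * s, ?_⟩
  simp only [F, IsRoot, eval_sub, eval_add, eval_mul, eval_pow, eval_C, eval_X] at hs
  linear_combination 9 * hs

theorem exists_pow_three_eq_of_nine_dvd {u : ℤ_[3]} (h : 9 ∣ u - 1 ∨ 9 ∣ u + 1) :
    ∃ t : ℤ_[3], t ^ 3 = u := by
  rcases h with ⟨m, hm⟩ | ⟨m, hm⟩
  · obtain ⟨t, ht⟩ := exists_pow_three_eq_one_add_nine_mul m
    exact ⟨t, by linear_combination ht - hm⟩
  · obtain ⟨t, ht⟩ := exists_pow_three_eq_one_add_nine_mul (-m)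
    exact ⟨-t, by linear_combination -ht - hm⟩

theorem exists_pow_three_add_add_three_mul_mul_pow_three_eq_zero {B C : ℤ_[3]}
    (hB : IsUnit B) (hC : IsUnit C) : ∃ x z : ℤ_[3], x ^ 3 + B + 3 * C * z ^ 3 = 0 := by
  obtain ⟨e, he⟩ := ZMod.exists_add_three_mul_mul_pow_three_eq_one_or_neg_one
    (toZModPow 2 B) (toZModPow 2 C) (hB.map _) (hC.map _)
  have nine_dvd_iff (y : ℤ_[3]) : 9 ∣ y ↔ toZModPow 2 y = 0 := by
    rw [toZModPow_eq_zero_iff_dvd]; norm_num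
  obtain ⟨t, ht⟩ := exists_pow_three_eq_of_nine_dvd (u := B + 3 * C * (e.val : ℤ_[3]) ^ 3) (by
    simp only [nine_dvd_iff, map_add, map_sub, map_mul, map_pow, map_natCast, map_ofNat,
      map_one, ZMod.natCast_zmod_val]
    exact he.imp (fun he ↦ by rw [he, sub_self]) (fun he ↦ by rw [he, neg_add_cancel]))
  exact ⟨-t, e.val, by linear_combination -ht⟩

end PadicInt

theorem diagonal_cubic_triadic_general (a b c : ℚ_[3])
    (ha : a.valuation = 0) (hb : b.valuation = 0) (hc : c.valuation = 1) :
    ∃ x y z : ℚ_[3], ¬(x = 0 ∧ y = 0 ∧ z = 0) ∧ a * x ^ 3 + b * y ^ 3 + c * z ^ 3 = 0 := by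
  rcases eq_or_ne a 0 with rfl | ha0
  · exact ⟨1, 0, 0, by simp, by simp⟩
  rcases eq_or_ne b 0 with rfl | hb0
  · exact ⟨0, 1, 0, by simp, by simp⟩
  have hc0 : c ≠ 0 := by rintro rfl; simp at hc
  have hB : ‖b / a‖ = 1 := by
    rw [norm_div, Padic.norm_eq_zpow_neg_valuation ha0, Padic.norm_eq_zpow_neg_valuation hb0,
      ha, hb]; norm_num
  have hC : ‖c / (3 * a)‖ = 1 := by
    have h3 : ‖(3 : ℚ_[3])‖ = 3⁻¹ := by simpa using Padic.norm_p (p := 3)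
    rw [norm_div, norm_mul, h3, Padic.norm_eq_zpow_neg_valuation ha0,
      Padic.norm_eq_zpow_neg_valuation hc0, ha, hc]; norm_num
  obtain ⟨x, z, hxz⟩ := PadicInt.exists_pow_three_add_add_three_mul_mul_pow_three_eq_zero
    (PadicInt.mkUnits hB).isUnit (PadicInt.mkUnits hC).isUnit
  refine ⟨x, 1, z, by simp, ?_⟩
  have h3 : ((3 : ℤ_[3]) : ℚ_[3]) = 3 := map_ofNat PadicInt.Coe.ringHom 3
  have hxz' := congrArg ((↑) : ℤ_[3] → ℚ_[3]) hxz
  push_cast [h3, PadicInt.mkUnits_eq] at hxz'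
  field_simp at hxz'
  linear_combination hxz'

/-- A diagonal 3-adic cubic with coefficients of valuations 0, 0, 1 has a
nontrivial zero. -/
theorem diagonal_cubic_triadic (a b c : ℚ_[3])
    (ha0 : a ≠ 0) (hb0 : b ≠ 0) (hc0 : c ≠ 0)
    (ha : a.valuation = 0) (hb : b.valuation = 0) (hc : c.valuation = 1) :
    ∃ x y z : ℚ_[3], ¬(x = 0 ∧ y = 0 ∧ z = 0) ∧ a * x ^ 3 + b * y ^ 3 + c * z ^ 3 = 0 :=
  diagonal_cubic_triadic_general a b c ha hb hc
end
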